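/- arXiv:1109.5243 — 2 statements merged into one kernel-verified Lean document; each statement's English description precedes it below -/
import Mathlib

section
/- Let (α, 𝒜, μ) be a finite measure space, let M₀ ∈ 𝒜, let ε > 0, and let F : 𝒜 → ℝ ∪ {+∞} be monotone decreasing with respect to a.e. set inclusion, i.e. μ(M₁ \ M₂) = 0 implies F(M₂) ≤ F(M₁) for measurable M₁, M₂. Suppose M* ∈ 𝒜 with F(M*) < +∞ minimizes the incremental functional M ↦ F(M) + (1/(2ε)) μ(M₀ Δ M)² over all measurable sets M ∈ 𝒜, where M₀ Δ M denotes the symmetric difference. Then μ(M₀ \ M*) = 0, i.e. the minimizer contains M₀ up to a μ-null set. -/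
/-!
Compare the minimizer `M⋆` with the competitor `M₀ ∪ M⋆`. Enlarging a set does not increase `F`,
and `M₀ Δ (M₀ ∪ M⋆) = M⋆ \ M₀`, so minimality forces
`μ (M₀ \ M⋆) + μ (M⋆ \ M₀) = μ (M₀ Δ M⋆) ≤ μ (M⋆ \ M₀)`; as `μ` is finite, `μ (M₀ \ M⋆) = 0`.
-/

open MeasureTheory
open scoped symmDiff ENNReal

theorem Set.symmDiff_union_self_right {α : Type*} (s t : Set α) : s ∆ (s ∪ t) = t \ s := by
  rw [symmDiff_of_le Set.subset_union_left, Set.union_sdiff_left]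

theorem ENNReal.le_of_mul_toReal_sq_le_mul_toReal_sq {c : ℝ} (hc : 0 < c) {a b : ℝ≥0∞}
    (ha : a ≠ ∞) (hb : b ≠ ∞) (h : c * a.toReal ^ 2 ≤ c * b.toReal ^ 2) : a ≤ b :=
  (ENNReal.toReal_le_toReal ha hb).1 <|
    (pow_le_pow_iff_left₀ ENNReal.toReal_nonneg ENNReal.toReal_nonneg two_ne_zero).1 <|
      le_of_mul_le_mul_left h hc

theorem WithTop.coe_le_coe_of_add_le_add {x y : WithTop ℝ} {a b : ℝ} (hx : x ≠ ⊤) (hyx : y ≤ x)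
    (h : x + a ≤ y + b) : a ≤ b :=
  WithTop.coe_le_coe.1 <| WithTop.le_of_add_le_add_left hx <| h.trans (by gcongr)

namespace MeasureTheory

variable {α : Type*} [MeasurableSpace α] {μ : Measure α} {s t : Set α}

theorem measure_sdiff_eq_zero_of_measure_symmDiff_le (hs : MeasurableSet s)
    (ht : MeasurableSet t) (hts : μ (t \ s) ≠ ∞) (h : μ (s ∆ t) ≤ μ (t \ s)) : μ (s \ t) = 0 := by
  rw [measure_symmDiff_eq hs.nullMeasurableSet ht.nullMeasurableSet] at h
  exact nonpos_iff_eq_zero.1 <|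
    (ENNReal.add_le_add_iff_right hts).1 (by rwa [zero_add])

end MeasureTheory

/-- Let `(α, 𝒜, μ)` be a finite measure space and `F` a set functional, decreasing with respect
to a.e. set inclusion. If a measurable set `M⋆` with `F(M⋆) < +∞` minimizes
`M ↦ F(M) + (1/(2ε)) μ(M₀ Δ M)²` over measurable sets, then `μ(M₀ \ M⋆) = 0`. -/
theorem shape_incremental_minimizer_contains_initial
    {α : Type*} [MeasurableSpace α] (μ : Measure α) [IsFiniteMeasure μ]
    (F : Set α → WithTop ℝ)
    (hF : ∀ M₁ M₂ : Set α, MeasurableSet M₁ → MeasurableSet M₂ →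
      μ (M₁ \ M₂) = 0 → F M₂ ≤ F M₁)
    (M₀ : Set α) (hM₀ : MeasurableSet M₀)
    (ε : ℝ) (hε : 0 < ε)
    (Mstar : Set α) (hMstar : MeasurableSet Mstar) (hfin : F Mstar ≠ ⊤)
    (hmin : ∀ M : Set α, MeasurableSet M →
      F Mstar + ((1 / (2 * ε) * (μ (M₀ ∆ Mstar)).toReal ^ 2 : ℝ) : WithTop ℝ)
        ≤ F M + ((1 / (2 * ε) * (μ (M₀ ∆ M)).toReal ^ 2 : ℝ) : WithTop ℝ)) :
    μ (M₀ \ Mstar) = 0 := by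
  have hunion : MeasurableSet (M₀ ∪ Mstar) := hM₀.union hMstar
  have hF_union : F (M₀ ∪ Mstar) ≤ F Mstar :=
    hF _ _ hMstar hunion <| by rw [Set.sdiff_eq_empty.2 Set.subset_union_right, measure_empty]
  have hpenalty := WithTop.coe_le_coe_of_add_le_add hfin hF_union (hmin _ hunion)
  rw [Set.symmDiff_union_self_right] at hpenalty
  exact measure_sdiff_eq_zero_of_measure_symmDiff_le hM₀ hMstar (measure_ne_top μ _) <|
    ENNReal.le_of_mul_toReal_sq_le_mul_toReal_sq (by positivity) (measure_ne_top μ _)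
      (measure_ne_top μ _) hpenalty
end

section
/- Let D ⊂ ℝ^d be a bounded open set and let Ω, Ω₀ ⊆ D be open. Then d_{H^c}(Ω ∩ Ω₀, Ω₀) ≤ d_{H^c}(Ω, Ω₀), where d_{H^c}(Ω₁, Ω₂) = sup over x ∈ closure(D) of |dist(x, closure(D) \ Ω₁) − dist(x, closure(D) \ Ω₂)|. -/
/-- The Hausdorff complementary distance on open subsets of a bounded open set `D ⊂ ℝ^d`:
`d_{H^c}(Ω₁,Ω₂) = sup_{x ∈ closure D} |dist(x, closure D \ Ω₁) − dist(x, closure D \ Ω₂)|`. -/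
noncomputable def dHc {d : ℕ} (D Ω₁ Ω₂ : Set (EuclideanSpace ℝ (Fin d))) : ℝ :=
  ⨆ x : closure D,
    |Metric.infDist (x : EuclideanSpace ℝ (Fin d)) (closure D \ Ω₁)
      - Metric.infDist (x : EuclideanSpace ℝ (Fin d)) (closure D \ Ω₂)|

/-!
Since `closure D \ (Ω ∩ Ω₀)` is the union of `closure D \ Ω` and `closure D \ Ω₀`, the distance
to it is `min a b`, where `a` and `b` are the distances to the two pieces; and
`|min a b - b| ≤ |a - b|`. So the inequality already holds pointwise, before taking suprema.
Comparing the suprema needs the right-hand family to be bounded above (an unbounded `⨆` of reals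
is `0`); it is, by `diam (closure D)`.
-/

namespace Metric

variable {X : Type*} [PseudoMetricSpace X]

theorem infDist_union_of_nonempty (x : X) {s t : Set X} (hs : s.Nonempty) (ht : t.Nonempty) :
    infDist x (s ∪ t) = min (infDist x s) (infDist x t) := by
  simp only [infDist, infEDist_union]
  exact ENNReal.toReal_min (infEDist_ne_top hs) (infEDist_ne_top ht)

theorem abs_infDist_union_sub_le (x : X) (s t : Set X) :
    |infDist x (s ∪ t) - infDist x t| ≤ |infDist x s - infDist x t| := by
  rcases s.eq_empty_or_nonempty with rfl | hs
  · simp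
  rcases t.eq_empty_or_nonempty with rfl | ht
  · simp
  rw [infDist_union_of_nonempty x hs ht]
  simpa using abs_min_sub_min_le_max (infDist x s) (infDist x t) (infDist x t) (infDist x t)

theorem infDist_le_diam_of_subset {C s : Set X} (hC : Bornology.IsBounded C) {x : X}
    (hx : x ∈ C) (hs : s ⊆ C) : infDist x s ≤ diam C := by
  rcases s.eq_empty_or_nonempty with rfl | ⟨y, hy⟩
  · simpa using diam_nonneg
  · exact (infDist_le_dist_of_mem hy).trans (dist_le_diam_of_mem hC hx (hs hy))

theorem abs_infDist_sub_infDist_le_diam {C s t : Set X} (hC : Bornology.IsBounded C) {x : X}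
    (hx : x ∈ C) (hs : s ⊆ C) (ht : t ⊆ C) : |infDist x s - infDist x t| ≤ diam C := by
  simpa using abs_sub_le_of_le_of_le infDist_nonneg (infDist_le_diam_of_subset hC hx hs)
    infDist_nonneg (infDist_le_diam_of_subset hC hx ht)

end Metric

open Metric

theorem dHc_inter_le_general {d : ℕ} (D Ω Ω₀ : Set (EuclideanSpace ℝ (Fin d)))
    (hDb : Bornology.IsBounded D) :
    dHc D (Ω ∩ Ω₀) Ω₀ ≤ dHc D Ω Ω₀ := by
  have hbdd : BddAbove (Set.range fun x : closure D =>
      |infDist (x : EuclideanSpace ℝ (Fin d)) (closure D \ Ω)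
        - infDist (x : EuclideanSpace ℝ (Fin d)) (closure D \ Ω₀)|) := by
    refine ⟨diam (closure D), ?_⟩
    rintro _ ⟨x, rfl⟩
    exact abs_infDist_sub_infDist_le_diam hDb.closure x.2 Set.sdiff_subset Set.sdiff_subset
  refine ciSup_mono hbdd fun x => ?_
  rw [Set.sdiff_inter]
  exact abs_infDist_union_sub_le _ _ _

/-- Intersecting with `Ω₀` does not increase the Hausdorff complementary distance to `Ω₀`:
`d_{H^c}(Ω ∩ Ω₀, Ω₀) ≤ d_{H^c}(Ω, Ω₀)`. -/
theorem dHc_inter_le {d : ℕ} (D Ω Ω₀ : Set (EuclideanSpace ℝ (Fin d)))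
    (hD : IsOpen D) (hDb : Bornology.IsBounded D)
    (hΩ : IsOpen Ω) (hΩD : Ω ⊆ D)
    (hΩ₀ : IsOpen Ω₀) (hΩ₀D : Ω₀ ⊆ D) :
    dHc D (Ω ∩ Ω₀) Ω₀ ≤ dHc D Ω Ω₀ :=
  dHc_inter_le_general D Ω Ω₀ hDb
end
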